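/- Let H ∈ (0, 1/2). Then the integral I_H = ∫₀^∞ y^{−1/2−H}/(y^{1−2H}+1) dy is finite and strictly positive, and lim_{ε→0⁺} √ε · Σ_{n=1}^∞ n^{H−3/2}/(ε + n^{2H−1}) = I_H. -/

import Mathlib

open MeasureTheory Real Set Filter
open Topology

/-!
Substituting `ε = δ ^ (1 - 2H)` turns `√ε · ∑ n ^ (H - 3/2) / (ε + n ^ (2H - 1))` termwise into
the Riemann sum `δ · ∑_{n ≥ 1} F (δ n)` of `F y = y ^ (-1/2 - H) / (y ^ (1 - 2H) + 1)`.
As `F` is positive, antitone and integrable on `(0, ∞)`, the integral test squeezes this Riemann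
sum between `∫_δ^∞ F` and `∫_0^∞ F`, and the former tends to the latter as `δ → 0⁺`.
-/

section RiemannSum

variable {f : ℝ → ℝ}

lemma AntitoneOn.mul_le_setIntegral_Ioc {a b : ℝ} (hanti : AntitoneOn f (Ioc a b))
    (hint : IntegrableOn f (Ioc a b)) (hab : a < b) :
    (b - a) * f b ≤ ∫ x in Ioc a b, f x := by
  calc (b - a) * f b = ∫ _ in Ioc a b, f b := by
        simp [Real.volume_real_Ioc_of_le hab.le]
    _ ≤ ∫ x in Ioc a b, f x :=
        setIntegral_mono_on (integrableOn_const (by simp)) hint measurableSet_Ioc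
          fun x hx => hanti hx (right_mem_Ioc.2 hab) hx.2

/- Mathlib's integral test wants antitonicity on `Ici 0`, but the functions of interest blow up
at `0` (where `rpow` takes the junk value `0`), so these variants start the comparison at `1`. -/
lemma AntitoneOn.summable_of_integrableOn_Ioi_zero' (hanti : AntitoneOn f (Ioi 0))
    (hint : IntegrableOn f (Ioi 0)) (hnn : ∀ x ∈ Ioi 0, 0 ≤ f x) :
    Summable fun n : ℕ => f n :=
  AntitoneOn.summable_of_integrableOn_Ioi (N := 1)
    (by simpa using hanti.mono (Ici_subset_Ioi.2 one_pos))
    (by simpa using hint.mono_set (Ioi_subset_Ioi zero_le_one))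
    (by simpa using fun x hx => hnn x (one_pos.trans hx))

lemma AntitoneOn.integral_Ioi_one_le_tsum_pnat (hanti : AntitoneOn f (Ioi 0))
    (hint : IntegrableOn f (Ioi 0)) (hnn : ∀ x ∈ Ioi 0, 0 ≤ f x) :
    ∫ x in Ioi 1, f x ≤ ∑' n : ℕ+, f n := by
  have := AntitoneOn.integral_le_tsum_comp_add (N := 1)
    (by simpa using hanti.mono (Ici_subset_Ioi.2 one_pos))
    (hanti.summable_of_integrableOn_Ioi_zero' hint hnn)
    (by simpa using fun x hx => hnn x (one_pos.trans hx))
  simpa [tsum_pnat_eq_tsum_succ (f := fun n : ℕ => f n)] using this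

lemma AntitoneOn.tsum_pnat_le_integral_Ioi_zero (hanti : AntitoneOn f (Ioi 0))
    (hint : IntegrableOn f (Ioi 0)) (hnn : ∀ x ∈ Ioi 0, 0 ≤ f x) :
    ∑' n : ℕ+, f n ≤ ∫ x in Ioi 0, f x := by
  have hfirst : f 1 ≤ ∫ x in Ioc 0 1, f x := by
    simpa using (hanti.mono Ioc_subset_Ioi_self).mul_le_setIntegral_Ioc
      (hint.mono_set Ioc_subset_Ioi_self) one_pos
  have htail := AntitoneOn.tsum_comp_add_le_integral (N := 1)
    (by simpa using hanti.mono (Ici_subset_Ioi.2 one_pos))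
    (by simpa using hint.mono_set (Ioi_subset_Ioi zero_le_one))
    (by simpa using fun x hx => hnn x (one_pos.trans hx))
  have hsum : Summable fun n : ℕ => f ↑(n + 1) :=
    (summable_nat_add_iff 1).2 (hanti.summable_of_integrableOn_Ioi_zero' hint hnn)
  rw [tsum_pnat_eq_tsum_succ (f := fun n : ℕ => f n), hsum.tsum_eq_zero_add,
    ← Ioc_union_Ioi_eq_Ioi zero_le_one, setIntegral_union Ioc_disjoint_Ioi_same measurableSet_Ioi
      (hint.mono_set Ioc_subset_Ioi_self) (hint.mono_set (Ioi_subset_Ioi zero_le_one))]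
  push_cast at htail ⊢
  linarith

lemma AntitoneOn.mul_tsum_pnat_comp_mul_mem_Icc (hanti : AntitoneOn f (Ioi 0))
    (hint : IntegrableOn f (Ioi 0)) (hnn : ∀ x ∈ Ioi 0, 0 ≤ f x) {δ : ℝ} (hδ : 0 < δ) :
    δ * ∑' n : ℕ+, f (δ * n) ∈ Icc (∫ x in Ioi δ, f x) (∫ x in Ioi 0, f x) := by
  have hanti' : AntitoneOn (fun x => f (δ * x)) (Ioi 0) := fun x hx y hy hxy =>
    hanti (mul_pos hδ hx) (mul_pos hδ hy) (by gcongr)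
  have hint' : IntegrableOn (fun x => f (δ * x)) (Ioi 0) :=
    (integrableOn_Ioi_comp_mul_left_iff f 0 hδ).2 (by simpa using hint)
  have hnn' : ∀ x ∈ Ioi 0, 0 ≤ f (δ * x) := fun x hx => hnn _ (mul_pos hδ hx)
  have hscale (a : ℝ) : δ * ∫ x in Ioi a, f (δ * x) = ∫ x in Ioi (δ * a), f x :=
    integral_comp_mul_left_Ioi' f a hδ
  constructor
  · simpa [hscale] using
      mul_le_mul_of_nonneg_left (hanti'.integral_Ioi_one_le_tsum_pnat hint' hnn') hδ.le
  · simpa [hscale] using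
      mul_le_mul_of_nonneg_left (hanti'.tsum_pnat_le_integral_Ioi_zero hint' hnn') hδ.le

lemma AntitoneOn.tendsto_mul_tsum_pnat_comp_mul (hanti : AntitoneOn f (Ioi 0))
    (hint : IntegrableOn f (Ioi 0)) (hnn : ∀ x ∈ Ioi 0, 0 ≤ f x) :
    Tendsto (fun δ => δ * ∑' n : ℕ+, f (δ * n)) (𝓝[>] 0) (𝓝 (∫ x in Ioi 0, f x)) := by
  have htail : Tendsto (fun δ => ∫ x in Ioi δ, f x) (𝓝[>] 0) (𝓝 (∫ x in Ioi 0, f x)) :=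
    hint.continuousWithinAt_Ici_primitive_Ioi.mono Ioi_subset_Ici_self
  have hmem : ∀ᶠ δ in 𝓝[>] 0,
      δ * ∑' n : ℕ+, f (δ * n) ∈ Icc (∫ x in Ioi δ, f x) (∫ x in Ioi 0, f x) :=
    eventually_mem_nhdsWithin.mono fun δ hδ => hanti.mul_tsum_pnat_comp_mul_mem_Icc hint hnn hδ
  exact tendsto_of_tendsto_of_tendsto_of_le_of_le' htail tendsto_const_nhds
    (hmem.mono fun _ h => h.1) (hmem.mono fun _ h => h.2)

end RiemannSum

section RpowDivRpowAddOne

variable {p q : ℝ}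

lemma rpow_div_rpow_add_one_pos {y : ℝ} (hy : 0 < y) : 0 < y ^ p / (y ^ q + 1) := by
  have := rpow_pos_of_pos hy q
  exact div_pos (rpow_pos_of_pos hy p) (by linarith)

lemma continuousOn_rpow_div_rpow_add_one :
    ContinuousOn (fun y : ℝ => y ^ p / (y ^ q + 1)) (Ioi 0) := by
  refine ContinuousOn.div ?_ ?_ fun y hy => ?_
  · exact fun y hy => (continuousAt_rpow_const y p (Or.inl hy.ne')).continuousWithinAt
  · exact fun y hy =>
      ((continuousAt_rpow_const y q (Or.inl hy.ne')).add continuousAt_const).continuousWithinAt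
  · have := rpow_pos_of_pos hy q
    positivity

lemma antitoneOn_rpow_div_rpow_add_one (hp : p ≤ 0) (hq : 0 ≤ q) :
    AntitoneOn (fun y : ℝ => y ^ p / (y ^ q + 1)) (Ioi 0) := fun a ha b _ hab => by
  have := rpow_pos_of_pos ha q
  exact div_le_div₀ (rpow_nonneg ha.le p) (rpow_le_rpow_of_nonpos ha hab hp) (by linarith)
    (by gcongr; exact ha.le)

lemma integrableOn_rpow_div_rpow_add_one (hp : -1 < p) (hpq : p - q < -1) :
    IntegrableOn (fun y : ℝ => y ^ p / (y ^ q + 1)) (Ioi 0) := by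
  have hmeas {s : Set ℝ} (hs : MeasurableSet s) (hsub : s ⊆ Ioi 0) :
      AEStronglyMeasurable (fun y : ℝ => y ^ p / (y ^ q + 1)) (volume.restrict s) :=
    (continuousOn_rpow_div_rpow_add_one.mono hsub).aestronglyMeasurable hs
  rw [← Ioc_union_Ioi_eq_Ioi zero_le_one]
  refine IntegrableOn.union ?_ ?_
  · have hdom : IntegrableOn (fun y : ℝ => y ^ p) (Ioc 0 1) :=
      (intervalIntegrable_iff_integrableOn_Ioc_of_le zero_le_one).1
        (intervalIntegral.intervalIntegrable_rpow' hp)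
    refine hdom.mono' (hmeas measurableSet_Ioc Ioc_subset_Ioi_self)
      (ae_restrict_of_forall_mem measurableSet_Ioc fun y hy => ?_)
    have := rpow_pos_of_pos hy.1 q
    rw [norm_of_nonneg (rpow_div_rpow_add_one_pos hy.1).le]
    exact div_le_self (rpow_nonneg hy.1.le p) (by linarith)
  · refine (integrableOn_Ioi_rpow_of_lt hpq zero_lt_one).mono'
      (hmeas measurableSet_Ioi (Ioi_subset_Ioi zero_le_one))
      (ae_restrict_of_forall_mem measurableSet_Ioi fun y (hy : 1 < y) => ?_)
    have hy0 : 0 < y := one_pos.trans hy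
    rw [norm_of_nonneg (rpow_div_rpow_add_one_pos hy0).le, rpow_sub hy0]
    exact div_le_div_of_nonneg_left (rpow_nonneg hy0.le p) (rpow_pos_of_pos hy0 q) (by linarith)

lemma integral_rpow_div_rpow_add_one_pos (hp : -1 < p) (hpq : p - q < -1) :
    0 < ∫ y in Ioi (0 : ℝ), y ^ p / (y ^ q + 1) := by
  rw [setIntegral_pos_iff_support_of_nonneg_ae
    (ae_restrict_of_forall_mem measurableSet_Ioi fun y hy => (rpow_div_rpow_add_one_pos hy).le)
    (integrableOn_rpow_div_rpow_add_one hp hpq)]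
  have : Ioi (0 : ℝ) ⊆ Function.support (fun y : ℝ => y ^ p / (y ^ q + 1)) ∩ Ioi 0 :=
    fun y hy => ⟨(rpow_div_rpow_add_one_pos hy).ne', hy⟩
  exact (by simp : 0 < volume (Ioi (0 : ℝ))).trans_le (measure_mono this)

lemma mul_rpow_div_rpow_add_one {δ x : ℝ} (hδ : 0 < δ) (hx : 0 < x) :
    δ * ((δ * x) ^ p / ((δ * x) ^ q + 1)) =
      δ ^ (p + 1) * (x ^ (p - q) / (δ ^ q + x ^ (-q))) := by
  rw [mul_rpow hδ.le hx.le, mul_rpow hδ.le hx.le, rpow_add hδ, rpow_sub hx, rpow_neg hx.le,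
    rpow_one]
  have := rpow_pos_of_pos hx q
  have := rpow_pos_of_pos hδ q
  field_simp

end RpowDivRpowAddOne

lemma tendsto_rpow_nhdsGT_zero {r : ℝ} (hr : 0 < r) :
    Tendsto (fun x : ℝ => x ^ r) (𝓝[>] 0) (𝓝[>] 0) := by
  refine tendsto_nhdsWithin_iff.2
    ⟨?_, eventually_mem_nhdsWithin.mono fun x hx => rpow_pos_of_pos hx r⟩
  simpa [zero_rpow hr.ne'] using
    (continuousAt_rpow_const 0 r (Or.inr hr.le)).tendsto.mono_left nhdsWithin_le_nhds

/-- for `H ∈ (0,1/2)`, `I_H = ∫₀^∞ y^{−1/2−H}/(y^{1−2H}+1) dy` is finite and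
positive, and `√ε · Σ_{n≥1} n^{H−3/2}/(ε + n^{2H−1}) → I_H` as `ε → 0⁺`. -/
theorem stmt_6 (H : ℝ) (hH : H ∈ Set.Ioo (0 : ℝ) (1/2)) :
    IntegrableOn (fun y : ℝ => y ^ (-1/2 - H) / (y ^ (1 - 2*H) + 1)) (Set.Ioi 0)
    ∧ 0 < ∫ y in Set.Ioi (0:ℝ), y ^ (-1/2 - H) / (y ^ (1 - 2*H) + 1)
    ∧ Filter.Tendsto
        (fun ε : ℝ => Real.sqrt ε *
          ∑' n : ℕ+, (n : ℝ) ^ (H - 3/2) / (ε + (n : ℝ) ^ (2*H - 1)))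
        (nhdsWithin 0 (Set.Ioi 0))
        (nhds (∫ y in Set.Ioi (0:ℝ), y ^ (-1/2 - H) / (y ^ (1 - 2*H) + 1))) := by
  obtain ⟨hH0, hH1⟩ := hH
  have hq : 0 < 1 - 2 * H := by linarith
  have hint := integrableOn_rpow_div_rpow_add_one (p := -1/2 - H) (q := 1 - 2 * H)
    (by linarith) (by linarith)
  refine ⟨hint, integral_rpow_div_rpow_add_one_pos (by linarith) (by linarith), ?_⟩
  have hriemann :=
    (antitoneOn_rpow_div_rpow_add_one (by linarith) hq.le).tendsto_mul_tsum_pnat_comp_mul hint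
      fun y hy => (rpow_div_rpow_add_one_pos hy).le
  refine (hriemann.comp (tendsto_rpow_nhdsGT_zero (inv_pos.2 hq))).congr'
    (eventually_mem_nhdsWithin.mono fun ε (hε : 0 < ε) => ?_)
  set δ := ε ^ (1 - 2 * H)⁻¹
  have hδ : 0 < δ := rpow_pos_of_pos hε _
  have hδq : δ ^ (1 - 2 * H) = ε := rpow_inv_rpow hε.le hq.ne'
  have hδp : δ ^ (-1/2 - H + 1) = √ε := by
    rw [sqrt_eq_rpow, ← rpow_mul hε.le]
    congr 1
    field_simp
    ring
  simp only [Function.comp_apply, ← tsum_mul_left]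
  refine tsum_congr fun n => ?_
  rw [mul_rpow_div_rpow_add_one hδ (Nat.cast_pos.2 n.pos), hδq, hδp]
  ring_nf
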